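/- arXiv:2304.02473 — 4 statements merged into one kernel-verified Lean document; each statement's English description precedes it below -/
import Mathlib

section
/- Let f₁, f₀ : (0,∞) → ℝ be differentiable functions such that f₀'(r) = -r·f₁'(r) for all r > 0, and suppose the function G(μ) = μ·f₁(μ/(1-μ)) + (1-μ)·f₀(μ/(1-μ)) is convex and differentiable on (0,1). Then for all μ, ν ∈ (0,1): μ·f₁(ν/(1-ν)) + (1-μ)·f₀(ν/(1-ν)) ≤ μ·f₁(μ/(1-μ)) + (1-μ)·f₀(μ/(1-μ)). That is, the score S defined by S(1,ν) = f₁(ν/(1-ν)) and S(0,1-ν) = f₀(ν/(1-ν)) is a proper scoring rule for Bernoulli distributions. -/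
/-!
Writing `G` for the expected score of the truthful forecast and `r(ν) = ν / (1 - ν)`, the
compatibility condition `f₀'(r) = -r f₁'(r)` makes the `f'`-terms of `G'` cancel, leaving
`G'(ν) = f₁(r(ν)) - f₀(r(ν))`. Hence the expected score of forecasting `ν` under `μ`,
`μ f₁(r(ν)) + (1 - μ) f₀(r(ν)) = G(ν) + (μ - ν) G'(ν)`, is the tangent line of `G` at `ν`
evaluated at `μ`, and convexity of `G` puts it below `G(μ)`.
-/

theorem ConvexOn.add_mul_sub_le_of_hasDerivAt {S : Set ℝ} {f : ℝ → ℝ} {f' x y : ℝ}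
    (hfc : ConvexOn ℝ S f) (hx : x ∈ S) (hy : y ∈ S) (hf' : HasDerivAt f f' x) :
    f x + f' * (y - x) ≤ f y := by
  rcases lt_trichotomy x y with hxy | rfl | hyx
  · have h := hfc.le_slope_of_hasDerivAt hx hy hxy hf'
    rw [slope_def_field, le_div_iff₀ (sub_pos.mpr hxy)] at h
    linarith
  · simp
  · have h := hfc.slope_le_of_hasDerivAt hy hx hyx hf'
    rw [slope_def_field, div_le_iff₀ (sub_pos.mpr hyx)] at h
    linarith

theorem hasDerivAt_div_one_sub {x : ℝ} (hx : x ≠ 1) :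
    HasDerivAt (fun t : ℝ => t / (1 - t)) (1 / (1 - x) ^ 2) x := by
  have hne : 1 - x ≠ 0 := sub_ne_zero.mpr hx.symm
  refine ((hasDerivAt_id' x).fun_div ((hasDerivAt_id' x).const_sub 1) hne).congr_deriv ?_
  ring

theorem hasDerivAt_expectedScore_self {f1 f0 : ℝ → ℝ} {ν : ℝ} (hν : ν ≠ 1)
    (hf1 : DifferentiableAt ℝ f1 (ν / (1 - ν)))
    (hf0 : DifferentiableAt ℝ f0 (ν / (1 - ν)))
    (hcompat : deriv f0 (ν / (1 - ν)) = -(ν / (1 - ν)) * deriv f1 (ν / (1 - ν))) :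
    HasDerivAt (fun μ => μ * f1 (μ / (1 - μ)) + (1 - μ) * f0 (μ / (1 - μ)))
      (f1 (ν / (1 - ν)) - f0 (ν / (1 - ν))) ν := by
  have hodds := hasDerivAt_div_one_sub hν
  refine (((hasDerivAt_id' ν).fun_mul (hf1.hasDerivAt.comp ν hodds)).fun_add
    (((hasDerivAt_id' ν).const_sub 1).fun_mul (hf0.hasDerivAt.comp ν hodds))).congr_deriv ?_
  have hne : 1 - ν ≠ 0 := sub_ne_zero.mpr hν.symm
  simp only [Function.comp_apply, hcompat]
  field_simp
  ring

theorem fvnce_stmt1_general (f1 f0 : ℝ → ℝ)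
    (hf1 : ∀ r > (0 : ℝ), DifferentiableAt ℝ f1 r)
    (hf0 : ∀ r > (0 : ℝ), DifferentiableAt ℝ f0 r)
    (hcompat : ∀ r > (0 : ℝ), deriv f0 r = -r * deriv f1 r)
    (hGconv : ConvexOn ℝ (Set.Ioo (0 : ℝ) 1)
      (fun μ => μ * f1 (μ / (1 - μ)) + (1 - μ) * f0 (μ / (1 - μ)))) :
    ∀ μ ∈ Set.Ioo (0 : ℝ) 1, ∀ ν ∈ Set.Ioo (0 : ℝ) 1,
      μ * f1 (ν / (1 - ν)) + (1 - μ) * f0 (ν / (1 - ν)) ≤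
        μ * f1 (μ / (1 - μ)) + (1 - μ) * f0 (μ / (1 - μ)) := by
  intro μ hμ ν hν
  have hr : ν / (1 - ν) > 0 := div_pos hν.1 (sub_pos.mpr hν.2)
  have hG' := hasDerivAt_expectedScore_self hν.2.ne (hf1 _ hr) (hf0 _ hr) (hcompat _ hr)
  have htangent := hGconv.add_mul_sub_le_of_hasDerivAt hν hμ hG'
  linear_combination htangent

/-- If `f₁, f₀` are differentiable on `(0,∞)` with `f₀'(r) = -r·f₁'(r)`, and
`G(μ) = μ·f₁(μ/(1-μ)) + (1-μ)·f₀(μ/(1-μ))` is convex and differentiable on `(0,1)`, then the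
induced score `S(1,ν) = f₁(ν/(1-ν))`, `S(0,1-ν) = f₀(ν/(1-ν))` is a proper scoring rule:
the expected score under the true parameter `μ` is maximized by predicting `ν = μ`. -/
theorem fvnce_stmt1 (f1 f0 : ℝ → ℝ)
    (hf1 : ∀ r > (0 : ℝ), DifferentiableAt ℝ f1 r)
    (hf0 : ∀ r > (0 : ℝ), DifferentiableAt ℝ f0 r)
    (hcompat : ∀ r > (0 : ℝ), deriv f0 r = -r * deriv f1 r)
    (hGconv : ConvexOn ℝ (Set.Ioo (0 : ℝ) 1)
      (fun μ => μ * f1 (μ / (1 - μ)) + (1 - μ) * f0 (μ / (1 - μ))))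
    (hGdiff : ∀ μ ∈ Set.Ioo (0 : ℝ) 1, DifferentiableAt ℝ
      (fun μ => μ * f1 (μ / (1 - μ)) + (1 - μ) * f0 (μ / (1 - μ))) μ) :
    ∀ μ ∈ Set.Ioo (0 : ℝ) 1, ∀ ν ∈ Set.Ioo (0 : ℝ) 1,
      μ * f1 (ν / (1 - ν)) + (1 - μ) * f0 (ν / (1 - ν)) ≤
        μ * f1 (μ / (1 - μ)) + (1 - μ) * f0 (μ / (1 - μ)) :=
  fvnce_stmt1_general f1 f0 hf1 hf0 hcompat hGconv
end

section
/- Let X and Z be finite nonempty types, let p_θ be a probability mass function on X × Z with p_θ(x,z) > 0 for all (x,z), let p_d and p_n be probability mass functions on X with p_n(x) > 0 for all x, and let f₁, f₀ : (0,∞) → ℝ be concave. Define the model marginal p_θ(x) = ∑_z p_θ(x,z) and the model posterior q*(z|x) = p_θ(x,z)/p_θ(x). Then the fully variational NCE objective evaluated at the model posterior equals the NCE objective: ∑_x p_d(x) ∑_z q*(z|x) · f₁( p_θ(x,z) / (p_n(x)·q*(z|x)) ) + ∑_x p_n(x) ∑_z q*(z|x) · f₀( p_θ(x,z) / (p_n(x)·q*(z|x))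 ) = ∑_x p_d(x) · f₁( p_θ(x)/p_n(x) ) + ∑_x p_n(x) · f₀( p_θ(x)/p_n(x) ). That is, the variational lower bound is tight when both encoders equal the model posterior. -/
/-!
At the model posterior `q*(z|x) = pθ(x,z)/pθ(x)` the importance weight
`pθ(x,z)/(pn(x) q*(z|x))` equals `pθ(x)/pn(x)` for every `z`, so each inner expectation over
`z ∼ q*(·|x)` is the expectation of a constant.
-/

open Finset

theorem div_mul_div_self_eq {a : ℝ} (ha : a ≠ 0) (c s : ℝ) : a / (c * (a / s)) = s / c := by
  rw [mul_div_assoc', div_div_eq_mul_div, mul_comm c a, mul_div_mul_left _ _ ha]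

theorem sum_normalized_mul_apply_ratio {ι : Type*} [Fintype ι] (w : ι → ℝ)
    (hw : ∑ j, w j ≠ 0) (c : ℝ) (f : ℝ → ℝ) :
    ∑ i, (w i / ∑ j, w j) * f (w i / (c * (w i / ∑ j, w j))) = f ((∑ j, w j) / c) := by
  calc ∑ i, (w i / ∑ j, w j) * f (w i / (c * (w i / ∑ j, w j)))
      = ∑ i, (w i / ∑ j, w j) * f ((∑ j, w j) / c) := by
        refine sum_congr rfl fun i _ => ?_
        rcases eq_or_ne (w i) 0 with h | h
        · simp [h]
        · rw [div_mul_div_self_eq h]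
    _ = f ((∑ j, w j) / c) := by rw [← sum_mul, ← sum_div, div_self hw, one_mul]

theorem fvnce_stmt13_general (X Z : Type*) [Fintype X] [Fintype Z] [Nonempty Z]
    (pθ : X × Z → ℝ) (hpθ : ∀ p, 0 < pθ p)
    (pd : X → ℝ)
    (pn : X → ℝ)
    (f1 f0 : ℝ → ℝ) :
    (∑ x, pd x * ∑ z, (pθ (x, z) / ∑ z', pθ (x, z')) *
        f1 (pθ (x, z) / (pn x * (pθ (x, z) / ∑ z', pθ (x, z'))))) +
    (∑ x, pn x * ∑ z, (pθ (x, z) / ∑ z', pθ (x, z')) *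
        f0 (pθ (x, z) / (pn x * (pθ (x, z) / ∑ z', pθ (x, z'))))) =
    (∑ x, pd x * f1 ((∑ z', pθ (x, z')) / pn x)) +
    (∑ x, pn x * f0 ((∑ z', pθ (x, z')) / pn x)) := by
  have hmarginal : ∀ x, ∑ z, pθ (x, z) ≠ 0 := fun x =>
    (sum_pos (fun z _ => hpθ (x, z)) univ_nonempty).ne'
  simp only [sum_normalized_mul_apply_ratio _ (hmarginal _)]

/-- The fully variational NCE objective evaluated with both encoders equal to
the model posterior `q*(z|x) = pθ(x,z)/pθ(x)` (where `pθ(x) = ∑_z pθ(x,z)`) equals the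
S-NCE objective: the variational lower bound is tight at the model posterior. -/
theorem fvnce_stmt13 (X Z : Type*) [Fintype X] [Fintype Z] [Nonempty X] [Nonempty Z]
    (pθ : X × Z → ℝ) (hpθ : ∀ p, 0 < pθ p) (hpθsum : ∑ p, pθ p = 1)
    (pd : X → ℝ) (hpd : ∀ x, 0 ≤ pd x) (hpdsum : ∑ x, pd x = 1)
    (pn : X → ℝ) (hpn : ∀ x, 0 < pn x) (hpnsum : ∑ x, pn x = 1)
    (f1 f0 : ℝ → ℝ)
    (hf1 : ConcaveOn ℝ (Set.Ioi (0 : ℝ)) f1) (hf0 : ConcaveOn ℝ (Set.Ioi (0 : ℝ)) f0) :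
    (∑ x, pd x * ∑ z, (pθ (x, z) / ∑ z', pθ (x, z')) *
        f1 (pθ (x, z) / (pn x * (pθ (x, z) / ∑ z', pθ (x, z'))))) +
    (∑ x, pn x * ∑ z, (pθ (x, z) / ∑ z', pθ (x, z')) *
        f0 (pθ (x, z) / (pn x * (pθ (x, z) / ∑ z', pθ (x, z'))))) =
    (∑ x, pd x * f1 ((∑ z', pθ (x, z')) / pn x)) +
    (∑ x, pn x * f0 ((∑ z', pθ (x, z')) / pn x)) :=
  fvnce_stmt13_general X Z pθ hpθ pd pn f1 f0
end

section
/- Let X and Z be finite nonempty types. Let p_d and p_n be probability mass functions on X with p_n(x) > 0 for all x, let p_Z be a probability mass function on Z with p_Z(z) > 0 for all z, let p_θ(·|z) be a probability mass function on X for each z with p_θ(x|z) > 0 for all x, z, and set the joint p_θ(x,z) = p_θ(x|z)·p_Z(z). For each x let q₁(·|x) and q₀(·|x) be probability mass functions on Z with q₁(z|x) > 0 and q₀(z|x) > 0 for all z. Then J⁰⁰(θ,q₁,q₀) := ∑_x p_d(x) ∑_z q₁(z|x)·log( p_θ(x,z) / (p_n(x)·q₁(z|x)) ) − ∑_x p_n(x)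 ∑_z q₀(z|x)·( p_θ(x,z) / (p_n(x)·q₀(z|x)) ) equals ∑_x p_d(x)·[ ∑_z q₁(z|x)·log p_θ(x|z) − KL(q₁(·|x) ‖ p_Z) ] − ∑_x p_d(x)·log p_n(x) − 1, where KL(q ‖ p) = ∑_z q(z)·log(q(z)/p(z)). In particular, J⁰⁰ equals the variational autoencoder objective up to additive terms independent of θ and q₁. -/
/-!
In the noise term the weights `pn x * q₀(z|x)` cancel against the denominator, leaving the total
mass `∑ₓ ∑_z pθ(x|z) pZ(z) = 1` of the joint model. In the data term the log-ratio splits as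
`log pθ(x|z) - log (q₁(z|x) / pZ(z)) - log pn(x)`, and the last summand, being constant in `z`,
survives the `q₁`-average unchanged.
-/

open Finset Real

lemma mul_sum_mul_div_mul_eq_sum {ι 𝕜 : Type*} [Fintype ι] [Field 𝕜] {a : 𝕜} {q f : ι → 𝕜}
    (ha : a ≠ 0) (hq : ∀ i, q i ≠ 0) :
    a * ∑ i, q i * (f i / (a * q i)) = ∑ i, f i := by
  rw [mul_sum]
  refine sum_congr rfl fun i _ => ?_
  field_simp [hq i]

lemma sum_sum_mul_eq_one_of_sum_eq_one {X Z R : Type*} [Fintype X] [Fintype Z]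
    [NonAssocSemiring R] {p : Z → X → R} {μ : Z → R}
    (hp : ∀ z, ∑ x, p z x = 1) (hμ : ∑ z, μ z = 1) :
    ∑ x, ∑ z, p z x * μ z = 1 := by
  rw [sum_comm]
  simp only [← sum_mul, hp, one_mul, hμ]

lemma log_mul_div_mul_eq {a b c q : ℝ} (ha : 0 < a) (hb : 0 < b) (hc : 0 < c) (hq : 0 < q) :
    log (a * b / (c * q)) = log a - log (q / b) - log c := by
  rw [log_div (by positivity) (by positivity), log_mul ha.ne' hb.ne', log_mul hc.ne' hq.ne',
    log_div hq.ne' hb.ne']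
  ring

lemma sum_mul_log_mul_div_mul_eq {Z : Type*} [Fintype Z] {a b q : Z → ℝ} {c : ℝ}
    (ha : ∀ z, 0 < a z) (hb : ∀ z, 0 < b z) (hc : 0 < c) (hq : ∀ z, 0 < q z)
    (hq1 : ∑ z, q z = 1) :
    ∑ z, q z * log (a z * b z / (c * q z)) =
      (∑ z, q z * log (a z)) - (∑ z, q z * log (q z / b z)) - log c := by
  simp only [fun z => log_mul_div_mul_eq (ha z) (hb z) hc (hq z), mul_sub]
  rw [sum_sub_distrib, sum_sub_distrib, ← sum_mul, hq1, one_mul]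

theorem fvnce_stmt15_general (X Z : Type*) [Fintype X] [Fintype Z]
    (pd : X → ℝ)
    (pn : X → ℝ) (hpn0 : ∀ x, 0 < pn x)
    (pZ : Z → ℝ) (hpZ0 : ∀ z, 0 < pZ z) (hpZ : ∑ z, pZ z = 1)
    (pθc : Z → X → ℝ) (hpθc0 : ∀ z x, 0 < pθc z x) (hpθc : ∀ z, ∑ x, pθc z x = 1)
    (q1 : X → Z → ℝ) (hq10 : ∀ x z, 0 < q1 x z) (hq1 : ∀ x, ∑ z, q1 x z = 1)
    (q0 : X → Z → ℝ) (hq00 : ∀ x z, 0 < q0 x z) :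
    (∑ x, pd x * ∑ z, q1 x z * Real.log (pθc z x * pZ z / (pn x * q1 x z))) -
      (∑ x, pn x * ∑ z, q0 x z * (pθc z x * pZ z / (pn x * q0 x z))) =
    (∑ x, pd x * ((∑ z, q1 x z * Real.log (pθc z x)) -
        ∑ z, q1 x z * Real.log (q1 x z / pZ z))) -
      (∑ x, pd x * Real.log (pn x)) - 1 := by
  have noise_term : ∑ x, pn x * ∑ z, q0 x z * (pθc z x * pZ z / (pn x * q0 x z)) = 1 := by
    simp only [fun x => mul_sum_mul_div_mul_eq_sum (f := fun z => pθc z x * pZ z)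
      (hpn0 x).ne' fun z => (hq00 x z).ne']
    exact sum_sum_mul_eq_one_of_sum_eq_one hpθc hpZ
  simp only [noise_term, fun x => sum_mul_log_mul_div_mul_eq (fun z => hpθc0 z x) hpZ0 (hpn0 x)
    (hq10 x) (hq1 x), mul_sub, sum_sub_distrib]

/-- The fully variational NCE objective `J⁰⁰` (with `f₁(r) = log r`,
`f₀(r) = -r`) for the latent-variable model `pθ(x,z) = pθ(x|z)·pZ(z)` equals the VAE
objective plus terms independent of `θ` and `q₁`:
`J⁰⁰ = ∑_x pd(x)·[∑_z q₁(z|x)·log pθ(x|z) − KL(q₁(·|x) ‖ pZ)] − ∑_x pd(x)·log pn(x) − 1`.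
Here `pθc z x` denotes `pθ(x|z)`, and `KL(q‖p) = ∑_z q(z)·log(q(z)/p(z))`. -/
theorem fvnce_stmt15 (X Z : Type*) [Fintype X] [Fintype Z] [Nonempty X] [Nonempty Z]
    (pd : X → ℝ) (hpd0 : ∀ x, 0 ≤ pd x) (hpd : ∑ x, pd x = 1)
    (pn : X → ℝ) (hpn0 : ∀ x, 0 < pn x) (hpn : ∑ x, pn x = 1)
    (pZ : Z → ℝ) (hpZ0 : ∀ z, 0 < pZ z) (hpZ : ∑ z, pZ z = 1)
    (pθc : Z → X → ℝ) (hpθc0 : ∀ z x, 0 < pθc z x) (hpθc : ∀ z, ∑ x, pθc z x = 1)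
    (q1 : X → Z → ℝ) (hq10 : ∀ x z, 0 < q1 x z) (hq1 : ∀ x, ∑ z, q1 x z = 1)
    (q0 : X → Z → ℝ) (hq00 : ∀ x z, 0 < q0 x z) (hq0 : ∀ x, ∑ z, q0 x z = 1) :
    (∑ x, pd x * ∑ z, q1 x z * Real.log (pθc z x * pZ z / (pn x * q1 x z))) -
      (∑ x, pn x * ∑ z, q0 x z * (pθc z x * pZ z / (pn x * q0 x z))) =
    (∑ x, pd x * ((∑ z, q1 x z * Real.log (pθc z x)) -
        ∑ z, q1 x z * Real.log (q1 x z / pZ z))) -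
      (∑ x, pd x * Real.log (pn x)) - 1 :=
  fvnce_stmt15_general X Z pd pn hpn0 pZ hpZ0 hpZ pθc hpθc0 hpθc q1 hq10 hq1 q0 hq00
end

section
/- Let X and Z be finite nonempty types, let p_d and p_n be probability mass functions on X with p_n(x) > 0 for all x, let p_θ be a function on X × Z, and for each x let q(·|x) be a probability mass function on Z with q(z|x) > 0 for all z. Define J¹⁰(θ,q) = ∑_{x,z} p_d(x)·p_θ(x,z)/p_n(x) − (1/2)·∑_{x,z} p_n(x)·q(z|x) · ( p_θ(x,z) / (p_n(x)·q(z|x)) )². Then J¹⁰(θ,q) = −(1/2)·∑_{x,z} ( p_θ(x,z) − p_d(x)·q(z|x) )² / ( p_n(x)·q(z|x) ) + (1/2)·∑_{x,z} p_d(x)²·q(z|x) / p_n(x). In particular, maximizing J¹⁰ over θ is equivalent to minimizing the weighted squared distance between p_θ(x,z) and p_d(x)·q(z|x) with weights 1/(p_n(x)·q(z|x)). -/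
theorem mul_div_sub_half_mul_sq_eq {K : Type*} [Field K] [CharZero K] (d t n q : K)
    (hn : n ≠ 0) (hq : q ≠ 0) :
    d * t / n - 1 / 2 * (n * q * (t / (n * q)) ^ 2) =
      -(1 / 2) * ((t - d * q) ^ 2 / (n * q)) + 1 / 2 * (d ^ 2 * q / n) := by
  field_simp
  ring

theorem fvnce_stmt18_general (X Z : Type*) [Fintype X] [Fintype Z]
    (pd : X → ℝ)
    (pn : X → ℝ) (hpn0 : ∀ x, 0 < pn x)
    (pθ : X × Z → ℝ)
    (q : X → Z → ℝ) (hq0 : ∀ x z, 0 < q x z) :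
    (∑ x, ∑ z, pd x * pθ (x, z) / pn x) -
      (1 / 2) * ∑ x, ∑ z, pn x * q x z * (pθ (x, z) / (pn x * q x z)) ^ 2 =
    -(1 / 2) * (∑ x, ∑ z, (pθ (x, z) - pd x * q x z) ^ 2 / (pn x * q x z)) +
      (1 / 2) * ∑ x, ∑ z, pd x ^ 2 * q x z / pn x := by
  simp only [Finset.mul_sum, ← Finset.sum_sub_distrib, ← Finset.sum_add_distrib]
  exact Finset.sum_congr rfl fun x _ => Finset.sum_congr rfl fun z _ =>
    mul_div_sub_half_mul_sq_eq _ _ _ _ (hpn0 x).ne' (hq0 x z).ne'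

/-- The fully variational NCE objective with `f₁(r) = r`, `f₀(r) = -r²/2`
(the case `(α,β) = (1,0)`) and tied encoders `q` equals, up to a constant independent of
`pθ`, the negative weighted squared distance between `pθ(x,z)` and `pd(x)·q(z|x)` with
weights `1/(pn(x)·q(z|x))`. -/
theorem fvnce_stmt18 (X Z : Type*) [Fintype X] [Fintype Z] [Nonempty X] [Nonempty Z]
    (pd : X → ℝ) (hpd0 : ∀ x, 0 ≤ pd x) (hpd : ∑ x, pd x = 1)
    (pn : X → ℝ) (hpn0 : ∀ x, 0 < pn x) (hpn : ∑ x, pn x = 1)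
    (pθ : X × Z → ℝ)
    (q : X → Z → ℝ) (hq0 : ∀ x z, 0 < q x z) (hq : ∀ x, ∑ z, q x z = 1) :
    (∑ x, ∑ z, pd x * pθ (x, z) / pn x) -
      (1 / 2) * ∑ x, ∑ z, pn x * q x z * (pθ (x, z) / (pn x * q x z)) ^ 2 =
    -(1 / 2) * (∑ x, ∑ z, (pθ (x, z) - pd x * q x z) ^ 2 / (pn x * q x z)) +
      (1 / 2) * ∑ x, ∑ z, pd x ^ 2 * q x z / pn x :=
  fvnce_stmt18_general X Z pd pn hpn0 pθ q hq0
end
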